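/- arXiv:2308.11146 — 3 statements merged into one kernel-verified Lean document; each statement's English description precedes it below -/
import Mathlib

section
/- If a finite simple graph G with m edges can be decomposed into α edge-disjoint forests (i.e., its edge set is a union of α forests), then Σ_{uv ∈ E} min(deg(u), deg(v)) ≤ 2·m·α. -/
/-!
Root every component of a forest and send each edge to its endpoint farther from the root. This is
injective, since a vertex has at most one neighbour closer to the root (two such neighbours would
give two distinct shortest paths from the root). Hence in a forest
`∑ uv, min (w u) (w v) ≤ ∑ v, w v` for any vertex weights `w`; with `w = deg_G` the right side is
`2m`, and summing over the `α` forests of the partition gives the bound.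
-/

/-- The edge set of `G` is partitioned into the forests `F i`. -/
def ForestPartition {V : Type*} {k : ℕ} (G : SimpleGraph V)
    (F : Fin k → SimpleGraph V) : Prop :=
  (∀ i, (F i).IsAcyclic) ∧ (∀ i, F i ≤ G) ∧
  (∀ u v, G.Adj u v → ∃ i, (F i).Adj u v) ∧
  (∀ i j, i ≠ j → ∀ u v, (F i).Adj u v → ¬ (F j).Adj u v)

open Finset SimpleGraph

namespace SimpleGraph

variable {V : Type*} {G : SimpleGraph V}

theorem IsAcyclic.eq_of_adj_of_dist_add_one_eq (hG : G.IsAcyclic) {r x y₁ y₂ : V}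
    (h₁ : G.Adj y₁ x) (h₂ : G.Adj y₂ x) (hd₁ : G.dist r y₁ + 1 = G.dist r x)
    (hd₂ : G.dist r y₂ + 1 = G.dist r x) : y₁ = y₂ := by
  have hr : G.Reachable r x := Reachable.of_dist_ne_zero (by omega)
  have geodesic : ∀ {y} (h : G.Adj y x), G.dist r y + 1 = G.dist r x →
      ∃ p : G.Walk r y, (p.concat h).IsPath := by
    intro y h hd
    obtain ⟨p, -, hp⟩ := (hr.trans h.symm.reachable).exists_path_of_dist
    exact ⟨p, (p.concat h).isPath_of_length_eq_dist (by simp [hp, hd])⟩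
  obtain ⟨p₁, hp₁⟩ := geodesic h₁ hd₁
  obtain ⟨p₂, hp₂⟩ := geodesic h₂ hd₂
  have := (hG.subsingleton_path r x).elim ⟨_, hp₁⟩ ⟨_, hp₂⟩
  exact (Walk.concat_inj (congrArg Subtype.val this)).1

theorem IsAcyclic.exists_injOn_edgeSet_mem (hG : G.IsAcyclic) :
    ∃ f : Sym2 V → V, (∀ e ∈ G.edgeSet, f e ∈ e) ∧ Set.InjOn f G.edgeSet := by
  let root : V → V := fun v => (G.connectedComponentMk v).out
  have root_reachable (v : V) : G.Reachable (root v) v :=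
    ConnectedComponent.exact (G.connectedComponentMk v).out_eq
  have root_adj {u v : V} (h : G.Adj u v) : root u = root v := by
    simp only [root, ConnectedComponent.connectedComponentMk_eq_of_adj h]
  have orient : ∀ e, ∃ x, e ∈ G.edgeSet →
      ∃ y, e = s(x, y) ∧ G.Adj y x ∧ G.dist (root x) y + 1 = G.dist (root x) x := by
    refine Sym2.ind fun u v => ?_
    by_cases huv : G.Adj u v
    · rcases hG.dist_eq_dist_add_one_of_adj_of_reachable (root u) huv (root_reachable u) with h | h
      · exact ⟨u, fun _ => ⟨v, rfl, huv.symm, h.symm⟩⟩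
      · exact ⟨v, fun _ => ⟨u, Sym2.eq_swap, huv, by rw [← root_adj huv]; exact h.symm⟩⟩
    · exact ⟨u, fun h => absurd h huv⟩
  choose f hf using orient
  refine ⟨f, fun e he => ?_, fun e₁ he₁ e₂ he₂ hfe => ?_⟩
  · obtain ⟨y, hy, -⟩ := hf e he
    have := Sym2.mem_mk_left (f e) y
    rwa [← hy] at this
  · obtain ⟨y₁, he₁_eq, h₁, hd₁⟩ := hf e₁ he₁
    obtain ⟨y₂, he₂_eq, h₂, hd₂⟩ := hf e₂ he₂
    rw [← hfe] at h₂ hd₂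
    rw [he₁_eq, he₂_eq, hfe, hG.eq_of_adj_of_dist_add_one_eq h₁ h₂ hd₁ hd₂]

theorem IsAcyclic.sum_edgeFinset_min_le_sum {M : Type*} [AddCommMonoid M] [LinearOrder M]
    [IsOrderedAddMonoid M] [CanonicallyOrderedAdd M] [Fintype V] [Fintype G.edgeSet]
    (hG : G.IsAcyclic) (w : V → M) :
    ∑ e ∈ G.edgeFinset, Sym2.lift ⟨fun u v => min (w u) (w v), fun _ _ => min_comm _ _⟩ e ≤
      ∑ v, w v := by
  classical
  obtain ⟨f, hf_mem, hf_inj⟩ := hG.exists_injOn_edgeSet_mem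
  calc ∑ e ∈ G.edgeFinset, Sym2.lift ⟨fun u v => min (w u) (w v), fun _ _ => min_comm _ _⟩ e
      ≤ ∑ e ∈ G.edgeFinset, w (f e) := by
        refine sum_le_sum fun e he => ?_
        induction e using Sym2.ind with
        | _ u v =>
          rcases Sym2.mem_iff.mp (hf_mem _ (mem_edgeFinset.mp he)) with h | h <;>
            simp [h]
    _ = ∑ v ∈ G.edgeFinset.image f, w v :=
        (sum_image fun _ h₁ _ h₂ => hf_inj (mem_edgeFinset.mp h₁) (mem_edgeFinset.mp h₂)).symm
    _ ≤ ∑ v, w v := sum_le_sum_of_subset (subset_univ _)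

end SimpleGraph

theorem ForestPartition.sum_edgeFinset_eq {V M : Type*} [Fintype V] [AddCommMonoid M] {k : ℕ}
    {G : SimpleGraph V} [DecidableRel G.Adj] {F : Fin k → SimpleGraph V}
    [∀ i, DecidableRel (F i).Adj] (hF : ForestPartition G F) (g : Sym2 V → M) :
    ∑ e ∈ G.edgeFinset, g e = ∑ i, ∑ e ∈ (F i).edgeFinset, g e := by
  classical
  obtain ⟨-, hle, hcover, hdisj⟩ := hF
  have hunion : G.edgeFinset = univ.biUnion fun i => (F i).edgeFinset := by
    ext e
    induction e using Sym2.ind with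
    | _ u v =>
      simp only [mem_edgeFinset, mem_edgeSet, mem_biUnion, mem_univ, true_and]
      exact ⟨hcover u v, fun ⟨i, hi⟩ => hle i hi⟩
  rw [hunion, sum_biUnion]
  intro i _ j _ hij
  refine disjoint_left.mpr fun e hi hj => ?_
  induction e using Sym2.ind with
  | _ u v => exact hdisj i j hij u v (mem_edgeFinset.mp hi) (mem_edgeFinset.mp hj)

theorem stmt_5_general {V : Type*} [Fintype V] (G : SimpleGraph V)
    [DecidableRel G.Adj] (α : ℕ) (F : Fin α → SimpleGraph V)
    (hF : ForestPartition G F) :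
    (∑ e ∈ G.edgeFinset,
        Sym2.lift ⟨fun u v => min (G.degree u) (G.degree v),
          fun u v => min_comm _ _⟩ e) ≤ 2 * G.edgeFinset.card * α := by
  classical
  calc _ = ∑ i, ∑ e ∈ (F i).edgeFinset,
        Sym2.lift ⟨fun u v => min (G.degree u) (G.degree v), fun u v => min_comm _ _⟩ e :=
        hF.sum_edgeFinset_eq _
    _ ≤ ∑ _i : Fin α, ∑ v, G.degree v :=
        sum_le_sum fun i _ => (hF.1 i).sum_edgeFinset_min_le_sum fun v => G.degree v
    _ = 2 * G.edgeFinset.card * α := by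
        simp [G.sum_degrees_eq_twice_card_edges, mul_comm]

theorem stmt_5 {V : Type*} [Fintype V] [DecidableEq V] (G : SimpleGraph V)
    [DecidableRel G.Adj] (α : ℕ) (F : Fin α → SimpleGraph V)
    (hF : ForestPartition G F) :
    (∑ e ∈ G.edgeFinset,
        Sym2.lift ⟨fun u v => min (G.degree u) (G.degree v),
          fun u v => min_comm _ _⟩ e) ≤ 2 * G.edgeFinset.card * α :=
  stmt_5_general G α F hF
end

section
/- If the edge set of a finite simple graph G with m edges can be partitioned into α forests, then the number of triangles in G is at most 2·m·α. -/
open Finset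

namespace SimpleGraph

variable {V : Type*} {G : SimpleGraph V}

lemma IsAcyclic.eq_of_adj_of_dist_add_one (hG : G.IsAcyclic) {u v w w' : V}
    (hw : G.Adj w v) (hw' : G.Adj w' v) (h : G.dist u w + 1 = G.dist u v)
    (h' : G.dist u w' + 1 = G.dist u v) : w = w' := by
  have hv : G.Reachable u v := Reachable.of_dist_ne_zero (by omega)
  obtain ⟨p, hp⟩ := (hv.trans hw.symm.reachable).exists_walk_length_eq_dist
  obtain ⟨q, hq⟩ := (hv.trans hw'.symm.reachable).exists_walk_length_eq_dist
  have hpath : (p.concat hw).IsPath := (p.concat hw).isPath_of_length_eq_dist (by simp [hp, h])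
  have hpath' : (q.concat hw').IsPath := (q.concat hw').isPath_of_length_eq_dist (by simp [hq, h'])
  have heq := (hG.subsingleton_path u v).elim ⟨_, hpath⟩ ⟨_, hpath'⟩
  exact (Walk.concat_inj (congrArg Subtype.val heq)).1

theorem IsAcyclic.exists_injOn_mem_edgeSet (hG : G.IsAcyclic) :
    ∃ t : Sym2 V → V, (∀ e ∈ G.edgeSet, t e ∈ e) ∧ Set.InjOn t G.edgeSet := by
  let root : V → V := fun v ↦ (G.connectedComponentMk v).out
  have hroot (v : V) : G.Reachable (root v) v := ConnectedComponent.exact (Quot.out_eq _)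
  have hroot_adj {x y : V} (h : G.Adj x y) : root x = root y := by
    simp only [root, ConnectedComponent.connectedComponentMk_eq_of_adj h]
  -- orient each edge towards the root: its tail `x` is the endpoint farther from the root
  have htail (e : Sym2 V) : ∃ x, e ∈ G.edgeSet →
      ∃ y, e = s(x, y) ∧ G.dist (root x) y + 1 = G.dist (root x) x := by
    induction e using Sym2.ind with
    | _ x y =>
      by_cases hxy : G.Adj x y
      · rcases hG.dist_eq_dist_add_one_of_adj_of_reachable (root x) hxy (hroot x) with h | h
        · exact ⟨x, fun _ ↦ ⟨y, rfl, h.symm⟩⟩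
        · exact ⟨y, fun _ ↦ ⟨x, Sym2.eq_swap, hroot_adj hxy ▸ h.symm⟩⟩
      · exact ⟨x, fun he ↦ absurd he hxy⟩
  choose t ht using htail
  refine ⟨t, fun e he ↦ ?_, fun e he f hf hef ↦ ?_⟩
  · obtain ⟨y, he', -⟩ := ht e he
    exact Sym2.mem_iff_exists.mpr ⟨y, he'⟩
  · obtain ⟨y, he', hy⟩ := ht e he
    obtain ⟨z, hf', hz⟩ := ht f hf
    have hye : G.Adj y (t e) := by rw [he'] at he; exact he.symm
    have hzf : G.Adj z (t f) := by rw [hf'] at hf; exact hf.symm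
    rw [he', hf', ← hef, hG.eq_of_adj_of_dist_add_one hye (hef ▸ hzf) hy (hef ▸ hz)]

variable [DecidableEq V]

theorem exists_card_tail_le_of_forall_isAcyclic {ι : Type*} [Fintype ι] [Fintype G.edgeSet]
    (F : ι → SimpleGraph V) (hF : ∀ i, (F i).IsAcyclic)
    (hcover : ∀ u v, G.Adj u v → ∃ i, (F i).Adj u v) :
    ∃ t : Sym2 V → V, (∀ e ∈ G.edgeSet, t e ∈ e) ∧
      ∀ x, #{e ∈ G.edgeFinset | t e = x} ≤ Fintype.card ι := by
  classical
  choose τ hτ hτ_inj using fun i ↦ (hF i).exists_injOn_mem_edgeSet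
  have hidx (e : G.edgeSet) : ∃ i, e.1 ∈ (F i).edgeSet := by
    obtain ⟨e, he⟩ := e
    induction e using Sym2.ind with
    | _ u v => exact hcover u v he
  choose idx hidx using hidx
  let t (e : Sym2 V) : V := if he : e ∈ G.edgeSet then τ (idx ⟨e, he⟩) e else e.out.1
  have ht {e : Sym2 V} (he : e ∈ G.edgeSet) : t e = τ (idx ⟨e, he⟩) e := dif_pos he
  refine ⟨t, fun e he ↦ ht he ▸ hτ _ e (hidx _), fun x ↦ ?_⟩
  rw [← Fintype.card_coe]
  refine Fintype.card_le_of_injective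
    (fun e ↦ idx ⟨e, mem_edgeFinset.mp (mem_filter.mp e.2).1⟩) ?_
  rintro ⟨e, he⟩ ⟨f, hf⟩ hi
  obtain ⟨heG, hex⟩ := mem_filter.mp he
  obtain ⟨hfG, hfx⟩ := mem_filter.mp hf
  rw [mem_edgeFinset] at heG hfG
  rw [ht heG] at hex
  rw [ht hfG] at hfx
  have hfi := hidx ⟨f, hfG⟩
  replace hi : idx ⟨e, heG⟩ = idx ⟨f, hfG⟩ := hi
  rw [← hi] at hfx hfi
  exact Subtype.ext (hτ_inj _ (hidx ⟨e, heG⟩) hfi (hex.trans hfx.symm))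

theorem card_cliqueFinset_three_le_of_card_tail_le [Fintype V] [DecidableRel G.Adj] {d : ℕ}
    (t : Sym2 V → V) (ht : ∀ e ∈ G.edgeSet, t e ∈ e)
    (hd : ∀ x, #{e ∈ G.edgeFinset | t e = x} ≤ d) :
    #(G.cliqueFinset 3) ≤ 2 * #G.edgeFinset * d := by
  have hfiber (e : Sym2 V) : #{f ∈ G.edgeFinset | t f ∈ e} ≤ 2 * d := by
    induction e using Sym2.ind with
    | _ x y =>
      simp only [Sym2.mem_iff, filter_or]
      grw [card_union_le, hd x, hd y]
      omega
  -- a triangle `{a, b, c}` is the union of `s(a, b)` and the edge joining its tail to `c`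
  have hsurj : Set.SurjOn (fun p ↦ p.1.toFinset ∪ p.2.toFinset)
      (G.edgeFinset.sigma fun e ↦ {f ∈ G.edgeFinset | t f ∈ e} : Set (Σ _ : Sym2 V, Sym2 V))
      (G.cliqueFinset 3) := by
    intro T hT
    obtain ⟨a, b, c, hab, hac, hbc, rfl⟩ := is3Clique_iff.mp (mem_cliqueFinset_iff.mp hT)
    have hx : t s(a, b) = a ∨ t s(a, b) = b := Sym2.mem_iff.mp (ht _ hab)
    refine ⟨⟨s(t s(a, b), c), s(a, b)⟩, ?_, ?_⟩
    · have hxc : G.Adj (t s(a, b)) c := by rcases hx with hx | hx <;> rw [hx] <;> assumption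
      simp [hab, hxc]
    · ext z
      simp only [Sym2.toFinset_mk_eq, mem_union, mem_insert, mem_singleton]
      rcases hx with hx | hx <;> rw [hx] <;> tauto
  calc #(G.cliqueFinset 3)
      ≤ #(G.edgeFinset.sigma fun e ↦ {f ∈ G.edgeFinset | t f ∈ e}) :=
        card_le_card_of_surjOn _ hsurj
    _ = ∑ e ∈ G.edgeFinset, #{f ∈ G.edgeFinset | t f ∈ e} := card_sigma _ _
    _ ≤ ∑ _e ∈ G.edgeFinset, 2 * d := sum_le_sum fun e _ ↦ hfiber e
    _ = 2 * #G.edgeFinset * d := by rw [sum_const, smul_eq_mul]; ring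

end SimpleGraph

open SimpleGraph

theorem stmt_6 {V : Type*} [Fintype V] [DecidableEq V] (G : SimpleGraph V)
    [DecidableRel G.Adj] (α : ℕ) (F : Fin α → SimpleGraph V)
    (hF : ForestPartition G F) :
    (G.cliqueFinset 3).card ≤ 2 * G.edgeFinset.card * α := by
  obtain ⟨hacyclic, -, hcover, -⟩ := hF
  obtain ⟨t, ht, hcard⟩ := exists_card_tail_le_of_forall_isAcyclic F hacyclic hcover
  simpa using card_cliqueFinset_three_le_of_card_tail_le t ht hcard
end

section
/- Fix ℓ ≥ 2. If the edge set of a finite simple graph G with m edges can be partitioned into α forests, then the number of copies of K_ℓ in G is at most C_ℓ · α^{ℓ−2} · m for a constant C_ℓ depending only on ℓ (e.g., C_ℓ = 2^{ℓ-2} works). -/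
open Finset

theorem Nat.choose_succ_le_mul_pow {k d : ℕ} (hk : k ≤ d) (r : ℕ) :
    k.choose (r + 1) ≤ k * d ^ r :=
  calc k.choose (r + 1) ≤ k ^ (r + 1) := Nat.choose_le_pow k (r + 1)
    _ = k * k ^ r := by ring
    _ ≤ k * d ^ r := by gcongr

namespace SimpleGraph

variable {V : Type*} [Fintype V]

theorem IsAcyclic.card_edgeFinset_le {H : SimpleGraph V} [Fintype H.edgeSet] (hH : H.IsAcyclic) :
    #H.edgeFinset ≤ Fintype.card V - 1 := by
  cases isEmpty_or_nonempty V
  · simpa using H.card_edgeFinset_le_card_choose_two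
  classical
  obtain ⟨T, hHT, -, hT⟩ := connected_top.exists_isTree_le_of_le_of_isAcyclic le_top hH
  have hcard := hT.card_edgeFinset
  have hmono := card_le_card (edgeFinset_mono hHT)
  omega

theorem card_edgeFinset_le_of_le_iSup_of_isAcyclic {ι : Type*} [Fintype ι]
    {F : ι → SimpleGraph V} (hF : ∀ i, (F i).IsAcyclic) {H : SimpleGraph V} [Fintype H.edgeSet]
    (hH : H ≤ ⨆ i, F i) : #H.edgeFinset ≤ Fintype.card ι * (Fintype.card V - 1) := by
  classical
  have hcover : H.edgeFinset ⊆ univ.biUnion fun i ↦ (F i).edgeFinset := by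
    intro e he
    induction e with
    | _ u w => simpa [← iSup_adj] using hH (mem_edgeFinset.1 he)
  calc #H.edgeFinset ≤ ∑ i, #(F i).edgeFinset := (card_le_card hcover).trans card_biUnion_le
    _ ≤ ∑ _i : ι, (Fintype.card V - 1) := sum_le_sum fun i _ ↦ (hF i).card_edgeFinset_le
    _ = Fintype.card ι * (Fintype.card V - 1) := by simp

theorem exists_degree_pos_lt_of_le_iSup_of_isAcyclic {ι : Type*} [Fintype ι]
    {F : ι → SimpleGraph V} (hF : ∀ i, (F i).IsAcyclic) {H : SimpleGraph V} [DecidableRel H.Adj]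
    (hH : H ≤ ⨆ i, F i) (hne : H ≠ ⊥) :
    ∃ v, 0 < H.degree v ∧ H.degree v < 2 * Fintype.card ι := by
  classical
  obtain ⟨u, w, huw⟩ := ne_bot_iff_exists_adj.1 hne
  have hι : 0 < Fintype.card ι := by
    obtain ⟨i, -⟩ := iSup_adj.1 (hH huw)
    exact Fintype.card_pos_iff.2 ⟨i⟩
  have : Nonempty H.support := ⟨⟨u, w, huw⟩⟩
  have hind : H.induce H.support ≤ ⨆ i, (F i).induce H.support := fun a b hab ↦ by
    simpa [iSup_adj] using hH hab
  have hedges := card_edgeFinset_le_of_le_iSup_of_isAcyclic (fun i ↦ (hF i).induce _) hind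
  obtain ⟨n, hn⟩ := Nat.exists_eq_add_one_of_ne_zero (Fintype.card_pos (α := H.support)).ne'
  have hsum : ∑ v, (H.induce H.support).degree v < ∑ _v : H.support, 2 * Fintype.card ι := by
    rw [sum_degrees_eq_twice_card_edges, sum_const, card_univ, smul_eq_mul, hn]
    rw [hn, Nat.add_sub_cancel] at hedges
    nlinarith
  obtain ⟨v, -, hv⟩ := exists_lt_of_sum_lt hsum
  rw [degree_induce_support] at hv
  exact ⟨v, (degree_pos_iff_mem_support _ _).2 v.2, hv⟩

variable [DecidableEq V]

theorem card_cliqueFinset_le_deleteIncidenceSet_add_choose (G : SimpleGraph V)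
    [DecidableRel G.Adj] (n : ℕ) (v : V) :
    #(G.cliqueFinset n) ≤
      #((G.deleteIncidenceSet v).cliqueFinset n) + (G.degree v).choose (n - 1) := by
  rw [← card_filter_add_card_filter_not (fun t ↦ v ∈ t), add_comm]
  gcongr ?_ + ?_
  · refine card_le_card fun t ht ↦ ?_
    simp only [mem_filter, mem_cliqueFinset_iff] at ht ⊢
    obtain ⟨⟨hclique, hcard⟩, hvt⟩ := ht
    refine ⟨fun a ha b hb hab ↦ deleteIncidenceSet_adj.2 ⟨hclique ha hb hab, ?_, ?_⟩, hcard⟩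
    · exact ne_of_mem_of_not_mem ha hvt
    · exact ne_of_mem_of_not_mem hb hvt
  · rw [← card_neighborFinset_eq_degree, ← card_powersetCard]
    refine card_le_card_of_injOn (fun t ↦ t.erase v) (fun t ht ↦ ?_) fun t ht s hs hts ↦ ?_
    · simp only [coe_filter, mem_cliqueFinset_iff, Set.mem_ofPred_eq] at ht
      obtain ⟨⟨hclique, hcard⟩, hvt⟩ := ht
      rw [mem_coe, mem_powersetCard, card_erase_of_mem hvt, hcard]
      refine ⟨fun a ha ↦ ?_, rfl⟩
      rw [mem_erase] at ha
      exact (mem_neighborFinset _ _ _).2 (hclique hvt ha.2 (Ne.symm ha.1))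
    · simp only [coe_filter, Set.mem_ofPred_eq] at ht hs
      rw [← insert_erase ht.2, ← insert_erase hs.2]
      exact congrArg (insert v) hts

theorem card_cliqueFinset_le_of_forall_exists_degree_le {d n : ℕ} (hn : 2 ≤ n)
    (G : SimpleGraph V) [DecidableRel G.Adj]
    (hG : ∀ (H : SimpleGraph V) [DecidableRel H.Adj], H ≤ G → H ≠ ⊥ →
      ∃ v, 0 < H.degree v ∧ H.degree v ≤ d) :
    #(G.cliqueFinset n) ≤ d ^ (n - 2) * #G.edgeFinset := by
  induction hm : #G.edgeFinset using Nat.strong_induction_on generalizing G with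
  | _ m ih =>
  obtain rfl | hne := eq_or_ne G ⊥
  · simp [(cliqueFree_bot hn).cliqueFinset]
  obtain ⟨v, hpos, hle⟩ := hG G le_rfl hne
  have hdel := card_edgeFinset_deleteIncidenceSet G v
  have hdeg := G.degree_le_card_edgeFinset v
  have ih' := ih _ (by omega) (G.deleteIncidenceSet v)
    (fun H _ hH ↦ hG H (hH.trans (deleteIncidenceSet_le G v))) rfl
  have hchoose := Nat.choose_succ_le_mul_pow hle (n - 2)
  rw [show n - 2 + 1 = n - 1 by omega] at hchoose
  calc #(G.cliqueFinset n)
      ≤ #((G.deleteIncidenceSet v).cliqueFinset n) + (G.degree v).choose (n - 1) :=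
        card_cliqueFinset_le_deleteIncidenceSet_add_choose G n v
    _ ≤ d ^ (n - 2) * (m - G.degree v) + G.degree v * d ^ (n - 2) := by
        rw [hdel, hm] at ih'
        exact add_le_add ih' hchoose
    _ = d ^ (n - 2) * m := by
        rw [mul_comm (G.degree v), ← mul_add, Nat.sub_add_cancel (hm ▸ hdeg)]

end SimpleGraph

open SimpleGraph

theorem stmt_15 {V : Type*} [Fintype V] [DecidableEq V] (G : SimpleGraph V)
    [DecidableRel G.Adj] (ℓ : ℕ) (hℓ : 2 ≤ ℓ) (α : ℕ)
    (F : Fin α → SimpleGraph V) (hF : ForestPartition G F) :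
    (G.cliqueFinset ℓ).card ≤ 2 ^ (ℓ - 2) * α ^ (ℓ - 2) * G.edgeFinset.card := by
  obtain ⟨hacyclic, -, hcover, -⟩ := hF
  have hGF : G ≤ ⨆ i, F i := fun u v huv ↦ iSup_adj.2 (hcover u v huv)
  have hdeg : ∀ (H : SimpleGraph V) [DecidableRel H.Adj], H ≤ G → H ≠ ⊥ →
      ∃ v, 0 < H.degree v ∧ H.degree v ≤ 2 * α := by
    intro H _ hHG hne
    obtain ⟨v, hpos, hlt⟩ :=
      exists_degree_pos_lt_of_le_iSup_of_isAcyclic hacyclic (hHG.trans hGF) hne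
    exact ⟨v, hpos, by simpa using hlt.le⟩
  simpa only [mul_pow] using card_cliqueFinset_le_of_forall_exists_degree_le hℓ G hdeg
end
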